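/- Let ℓ ≥ 1 and let A be a unital simple ring with center F. Elements a₁,…,a_ℓ ∈ A are linearly dependent over F if and only if the Capelli polynomial evaluates to zero for all choices of parameters: c_ℓ(a₁,…,a_ℓ; b₁,…,b_{ℓ−1}) = Σ_{π ∈ S_ℓ} sign(π) a_{π(1)} b₁ a_{π(2)} b₂ ⋯ b_{ℓ−1} a_{π(ℓ)} = 0 for all b₁,…,b_{ℓ−1} ∈ A. -/

import Mathlib

/-!
The Capelli polynomial is the alternatization of the multilinear map
`v ↦ v₀ b₁ v₁ ⋯ bₙ vₙ`, so it vanishes on `F`-dependent tuples.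

Conversely, expanding along the first parameter `u` writes `c_{ℓ+1}(a; u, b)` as
`Σ_p a_p u e_p` with `e_0 = c_ℓ(a₂, …, a_{ℓ+1}; b)`. In a simple ring with center `F`,
`Σ_p a_p u e_p = 0` for all `u` and `F`-independent `a_p` force every `e_p = 0`: if `e_i ≠ 0`,
the identities `e_j r e_i = e_i r e_j` (from induction on the number of terms) make each `e_j` a
central multiple of `e_i`, hence an `F`-multiple, and then `(Σ_j λ_j a_j) u e_i = 0` for all `u`
gives a dependence. So by induction on `ℓ` some `c_{ℓ+1}(a; u, b)` is nonzero.
-/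

/-- The Capelli polynomial
`c_{n+1}(a₁,…,a_{n+1}; b₁,…,b_n) = Σ_π sign(π) a_{π(1)} b₁ a_{π(2)} ⋯ b_n a_{π(n+1)}`
evaluated in a ring. -/
noncomputable def capelli {A : Type*} [Ring A] (n : ℕ) (a : Fin (n + 1) → A) (b : Fin n → A) : A :=
  ∑ π : Equiv.Perm (Fin (n + 1)),
    ((Equiv.Perm.sign π : ℤ) •
      (a (π 0) * (List.ofFn fun i : Fin n => b i * a (π i.succ)).prod))

section Alternating

variable {R A : Type*} [CommRing R] [Ring A] [Algebra R A]

variable (R) in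
noncomputable def capelliMonomial (n : ℕ) (b : Fin n → A) : MultilinearMap R (fun _ : Fin (n + 1) => A) A :=
  (MultilinearMap.mkPiAlgebraFin R (n + 1) A).compLinearMap
    (Fin.cases LinearMap.id fun i => LinearMap.mulLeft R (b i))

theorem capelliMonomial_apply (n : ℕ) (b : Fin n → A) (v : Fin (n + 1) → A) :
    capelliMonomial R n b v = v 0 * (List.ofFn fun i : Fin n => b i * v i.succ).prod := by
  simp [capelliMonomial, List.ofFn_succ]

theorem alternatization_capelliMonomial_apply (n : ℕ) (b : Fin n → A) (a : Fin (n + 1) → A) :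
    (capelliMonomial R n b).alternatization a = capelli n a b := by
  simp only [MultilinearMap.alternatization_apply, MultilinearMap.domDomCongr_apply,
    capelliMonomial_apply, Units.smul_def, capelli]

theorem capelli_eq_zero_of_not_linearIndependent [IsDomain R] [Module.IsTorsionFree R A]
    {n : ℕ} {a : Fin (n + 1) → A} (h : ¬ LinearIndependent R a) (b : Fin n → A) :
    capelli n a b = 0 := by
  rw [← alternatization_capelliMonomial_apply (R := R)]
  exact AlternatingMap.map_linearDependent _ a h

end Alternating

section Expansion

variable {A : Type*} [Ring A]

theorem capelli_zero (a : Fin 1 → A) (b : Fin 0 → A) : capelli 0 a b = a 0 := by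
  simp [capelli, Subsingleton.elim _ (1 : Equiv.Perm (Fin 1))]

theorem capelli_succ_cons (n : ℕ) (a : Fin (n + 2) → A) (u : A) (b : Fin n → A) :
    capelli (n + 1) a (Fin.cons u b) =
      ∑ p, a p * u * ((if p = 0 then 1 else -1 : ℤ) •
        capelli n (fun k => a (Equiv.swap 0 p k.succ)) b) := by
  -- Write `π` as `swap 0 p * σ.succ` with `p = π 0`, so that `sign π = ±sign σ`.
  rw [capelli, ← Equiv.Perm.decomposeFin.symm.sum_comp, Fintype.sum_prod_type]
  refine Finset.sum_congr rfl fun p _ => ?_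
  rw [capelli, Finset.smul_sum, Finset.mul_sum]
  refine Finset.sum_congr rfl fun σ _ => ?_
  simp only [Equiv.Perm.decomposeFin.symm_sign, Equiv.Perm.decomposeFin_symm_apply_zero,
    List.ofFn_succ, List.prod_cons, Equiv.Perm.decomposeFin_symm_apply_succ, Fin.cons_zero,
    Fin.cons_succ, Units.val_mul, mul_smul, apply_ite (fun w : ℤˣ => (w : ℤ)),
    Units.val_one, Units.val_neg, mul_smul_comm, mul_assoc]

end Expansion

namespace IsSimpleRing

variable {A : Type*} [Ring A] [IsSimpleRing A]

theorem eq_zero_of_forall_mul_mul_eq_zero {a b : A} (h : ∀ x, a * x * b = 0) (hb : b ≠ 0) :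
    a = 0 := by
  let annihilator : TwoSidedIdeal A := .mk' {y | ∀ x, y * x * b = 0}
    (fun x => by simp)
    (fun hy hz x => by simp [add_mul, hy x, hz x])
    (fun hy x => by simp [neg_mul, hy x])
    (fun {z y} hy x => by simp only [mul_assoc] at hy ⊢; rw [hy x, mul_zero])
    (fun {y z} hy x => by rw [mul_assoc y z, hy])
  by_contra ha
  have hone : (1 : A) ∈ annihilator :=
    one_mem_of_ne_zero_mem _ ha ((TwoSidedIdeal.mem_mk' ..).2 h)
  rw [TwoSidedIdeal.mem_mk'] at hone
  exact hb (by simpa using hone 1)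

theorem exists_mem_center_eq_mul {R : Type*} [CommRing R] [Algebra R A] {d e : A}
    (h : ∀ r, d * r * e = e * r * d) (he : e ≠ 0) : ∃ c ∈ Subalgebra.center R A, d = c * e := by
  -- The `z` for which `x * e ↦ z * x * d` is a left multiplication form an ideal containing `e`.
  let J : TwoSidedIdeal A := .mk' {z | ∃ c, ∀ x, c * x * e = z * x * d}
    ⟨0, by simp⟩
    (fun ⟨c, hc⟩ ⟨c', hc'⟩ => ⟨c + c', fun x => by simp only [add_mul, hc, hc']⟩)
    (fun ⟨c, hc⟩ => ⟨-c, fun x => by simp only [neg_mul, hc]⟩)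
    (fun {w z} ⟨c, hc⟩ => ⟨w * c, fun x => by simp only [mul_assoc] at hc ⊢; rw [hc]⟩)
    (fun {z w} ⟨c, hc⟩ => ⟨c * w, fun x => by simpa only [mul_assoc] using hc (w * x)⟩)
  obtain ⟨c, hc⟩ := (TwoSidedIdeal.mem_mk' ..).1
    (one_mem_of_ne_zero_mem J he ((TwoSidedIdeal.mem_mk' ..).2 ⟨d, h⟩))
  simp only [one_mul] at hc
  refine ⟨c, Subalgebra.mem_center_iff.2 fun y => ?_, by simpa using (hc 1).symm⟩
  refine (sub_eq_zero.1 (eq_zero_of_forall_mul_mul_eq_zero (fun x => ?_) he)).symm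
  rw [sub_mul, sub_mul, mul_assoc c y, hc, mul_assoc y c x, mul_assoc y (c * x) e, hc,
    mul_assoc y x d, sub_self]

end IsSimpleRing

open Finset in
theorem LinearIndepOn.eq_zero_of_forall_sum_mul_mul_eq_zero {F A ι : Type*} [Field F] [Ring A]
    [Algebra F A] [IsSimpleRing A] (hcentral : Subalgebra.center F A = ⊥) {a e : ι → A}
    {s : Finset ι} (ha : LinearIndepOn F a (s : Set ι)) (h : ∀ u, ∑ j ∈ s, a j * u * e j = 0) :
    ∀ j ∈ s, e j = 0 := by
  classical
  induction s using Finset.induction_on generalizing e with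
  | empty => simp
  | insert i s hi ih =>
    rw [coe_insert, linearIndepOn_insert (mod_cast hi)] at ha
    obtain ⟨ha, hai⟩ := ha
    simp only [sum_insert hi] at h
    by_cases hei : e i = 0
    · simp only [hei, mul_zero, zero_add] at h
      simpa [hei] using ih ha h
    exfalso
    -- Replacing `e j` by `e j * r * e i - e i * r * e j` kills the `i`-th term.
    have hcomm : ∀ j ∈ s, ∀ r, e j * r * e i = e i * r * e j := by
      intro j hj r
      refine sub_eq_zero.1 (ih ha (e := fun j => e j * r * e i - e i * r * e j) (fun u => ?_) j hj)
      have h₁ := congrArg (· * r * e i) (h u)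
      have h₂ := h (u * e i * r)
      simp only [mul_sub, sum_sub_distrib, sum_mul, add_mul, zero_mul] at h₁ ⊢
      simp only [mul_assoc] at h₁ h₂ ⊢
      rw [eq_neg_of_add_eq_zero_right h₁, eq_neg_of_add_eq_zero_right h₂, sub_self]
    have hscalar : ∀ j ∈ s, ∃ μ : F, e j = μ • e i := fun j hj => by
      obtain ⟨c, hc, hcj⟩ := IsSimpleRing.exists_mem_center_eq_mul (R := F) (hcomm j hj) hei
      rw [hcentral] at hc
      obtain ⟨μ, rfl⟩ := Algebra.mem_bot.1 hc
      exact ⟨μ, by rw [hcj, Algebra.smul_def]⟩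
    choose! μ hμ using hscalar
    have hdep : a i + ∑ j ∈ s, μ j • a j = 0 := by
      refine IsSimpleRing.eq_zero_of_forall_mul_mul_eq_zero (fun u => ?_) hei
      rw [← h u, add_mul, add_mul, sum_mul, sum_mul]
      congr 1
      refine sum_congr rfl fun j hj => ?_
      rw [hμ j hj, smul_mul_assoc, smul_mul_assoc, mul_smul_comm]
    apply hai
    rw [eq_neg_of_add_eq_zero_left hdep]
    exact neg_mem (Submodule.sum_mem _ fun j hj =>
      Submodule.smul_mem _ _ (Submodule.subset_span ⟨j, hj, rfl⟩))

theorem exists_capelli_ne_zero {F A : Type*} [Field F] [Ring A] [Algebra F A] [IsSimpleRing A]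
    (hcentral : Subalgebra.center F A = ⊥) :
    ∀ (n : ℕ) (a : Fin (n + 1) → A), LinearIndependent F a → ∃ b, capelli n a b ≠ 0
  | 0, a, ha => ⟨Fin.elim0, by rw [capelli_zero]; exact ha.ne_zero 0⟩
  | n + 1, a, ha => by
    obtain ⟨b, hb⟩ := exists_capelli_ne_zero hcentral n (fun k => a k.succ)
      (ha.comp Fin.succ (Fin.succ_injective _))
    by_contra! hvanish
    have hexpansion : ∀ u, ∑ p, a p * u * ((if p = 0 then 1 else -1 : ℤ) •
        capelli n (fun k => a (Equiv.swap 0 p k.succ)) b) = 0 := fun u => by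
      rw [← capelli_succ_cons]
      exact hvanish _
    have := LinearIndepOn.eq_zero_of_forall_sum_mul_mul_eq_zero hcentral
      (by rwa [Finset.coe_univ, linearIndepOn_univ_iff]) hexpansion 0 (Finset.mem_univ _)
    exact hb (by simpa using this)

/-- In a unital simple ring `A` with center `F`, elements `a₁,…,a_ℓ` are
`F`-linearly dependent iff all evaluations of the Capelli polynomial at them
vanish. -/
theorem stmt_16 {F A : Type*} [Field F] [Ring A] [Algebra F A]
    [IsSimpleRing A] (hcentral : Subalgebra.center F A = ⊥)
    (n : ℕ) (a : Fin (n + 1) → A) :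
    ¬ LinearIndependent F a ↔ ∀ b : Fin n → A, capelli n a b = 0 :=
  ⟨capelli_eq_zero_of_not_linearIndependent, fun h ha =>
    (exists_capelli_ne_zero hcentral n a ha).elim fun b hb => hb (h b)⟩
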